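/- arXiv:1806.00209 — 8 statements merged into one kernel-verified Lean document; each statement's English description precedes it below -/
import Mathlib

section
/- For any nonzero polynomial p ∈ ℂ[z] and any nonzero constant κ ∈ ℂ, p factors as p = gcd(p, Δ_κ p) · rãd_κ(p), where Δ_κ p(z) = p(z+κ) − p(z) and rãd_κ(p)(z) = ∏_{w∈ℂ} (z−w)^{d_κ(w)} with d_κ(w) = ord_w(p) − min(ord_w(p), ord_{w+κ}(p)). -/
open Polynomial

noncomputable def deltaP (κ : ℂ) (p : ℂ[X]) : ℂ[X] := p.comp (X + C κ) - p

noncomputable def nTilde (κ : ℂ) (p : ℂ[X]) : ℕ :=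
  ∑ᶠ w : ℂ, (p.rootMultiplicity w - min (p.rootMultiplicity w) (p.rootMultiplicity (w + κ)))

noncomputable def radTilde (κ : ℂ) (p : ℂ[X]) : ℂ[X] :=
  ∏ᶠ w : ℂ, (X - C w) ^ (p.rootMultiplicity w - min (p.rootMultiplicity w) (p.rootMultiplicity (w + κ)))

noncomputable def nTildeQ (κ : ℂ) (q : ℕ) (p : ℂ[X]) : ℕ :=
  ∑ᶠ w : ℂ, (p.rootMultiplicity w -
    (Finset.range (q + 1)).inf' (Finset.nonempty_range_iff.mpr (Nat.succ_ne_zero q)) (fun j => p.rootMultiplicity (w + (j : ℂ) * κ)))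

noncomputable def kFac (κ : ℂ) (n : ℕ) (p : ℂ[X]) : ℂ[X] :=
  ∏ j ∈ Finset.range n, p.comp (X + C ((j : ℂ) * κ))

lemma rootMult_comp (p : ℂ[X]) (t a : ℂ) :
    (p.comp (X + C t)).rootMultiplicity a = p.rootMultiplicity (a + t) := by
  have h1 := rootMultiplicity_eq_rootMultiplicity (p := p.comp (X + C t)) (t := a)
  have h2 := rootMultiplicity_eq_rootMultiplicity (p := p) (t := a + t)
  have h3 : (X + C t).comp (X + C a) = X + C (a + t) := by
    simp [add_comp, map_add]; ring
  rw [h1, h2, comp_assoc, h3]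

lemma rootMult_le_of_dvd {p q : ℂ[X]} (hq : q ≠ 0) (h : p ∣ q) (a : ℂ) :
    p.rootMultiplicity a ≤ q.rootMultiplicity a := by
  rw [le_rootMultiplicity_iff hq]
  exact dvd_trans (pow_rootMultiplicity_dvd p a) h

lemma rootMult_gcd {p q : ℂ[X]} (hp : p ≠ 0) (hq : q ≠ 0) (a : ℂ) :
    (gcd p q).rootMultiplicity a = min (p.rootMultiplicity a) (q.rootMultiplicity a) := by
  have hg : gcd p q ≠ 0 := fun h => hp ((gcd_eq_zero_iff p q).mp h).1
  refine le_antisymm (le_min ?_ ?_) ?_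
  · exact rootMult_le_of_dvd hp (gcd_dvd_left p q) a
  · exact rootMult_le_of_dvd hq (gcd_dvd_right p q) a
  · rw [le_rootMultiplicity_iff hg]
    refine dvd_gcd ?_ ?_
    · exact dvd_trans (pow_dvd_pow _ (min_le_left _ _)) (pow_rootMultiplicity_dvd p a)
    · exact dvd_trans (pow_dvd_pow _ (min_le_right _ _)) (pow_rootMultiplicity_dvd q a)

lemma rootMult_gcd_delta {p : ℂ[X]} (hp : p ≠ 0) {κ : ℂ} (hκ : κ ≠ 0) (a : ℂ) :
    (gcd p (deltaP κ p)).rootMultiplicity a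
      = min (p.rootMultiplicity a) (p.rootMultiplicity (a + κ)) := by
  by_cases hΔ : deltaP κ p = 0
  · have hc : p.comp (X + C κ) = p := sub_eq_zero.mp (by simpa [deltaP] using hΔ)
    have hnoroot : ∀ w : ℂ, ¬ p.IsRoot w := by
      intro w hw
      have hper : ∀ n : ℕ, p.IsRoot (w + n * κ) := by
        intro n
        induction n with
        | zero => simpa using hw
        | succ n ih =>
          have h1 : (p.comp (X + C κ)).IsRoot (w + n * κ) := by rw [hc]; exact ih
          rw [IsRoot, eval_comp] at h1
          have key : p.eval (w + (n : ℂ) * κ + κ) = 0 := by simpa using h1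
          have key2 : w + (n : ℂ) * κ + κ = w + ((n + 1 : ℕ) : ℂ) * κ := by push_cast; ring
          rwa [IsRoot, ← key2]
      have hfin := Polynomial.finite_setOf_isRoot hp
      refine Set.infinite_of_injective_forall_mem (f := fun n : ℕ => w + n * κ) ?_ ?_ hfin
      · intro m n hmn
        simp only [add_right_inj] at hmn
        exact_mod_cast mul_right_cancel₀ hκ hmn
      · intro n; exact hper n
    have h0 : ∀ b : ℂ, p.rootMultiplicity b = 0 := by
      intro b
      by_contra h
      exact hnoroot b ((rootMultiplicity_pos hp).mp (Nat.pos_of_ne_zero h))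
    have hL : (gcd p (deltaP κ p)).rootMultiplicity a = 0 :=
      Nat.le_zero.mp (le_trans (rootMult_le_of_dvd hp (gcd_dvd_left _ _) a) (le_of_eq (h0 a)))
    rw [hL, h0 a, h0 (a + κ)]
    simp
  · rw [rootMult_gcd hp hΔ a]
    set m := p.rootMultiplicity a with hm
    set m' := p.rootMultiplicity (a + κ) with hm'
    have hcomp : (p.comp (X + C κ)).rootMultiplicity a = m' := rootMult_comp p κ a
    have hpc : p.comp (X + C κ) ≠ 0 := by
      intro h
      apply hp
      have hcc : (p.comp (X + C κ)).comp (X - C κ) = p := by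
        rw [comp_assoc]; simp
      rw [h, zero_comp] at hcc
      exact hcc.symm
    rcases le_or_gt m m' with hle | hlt
    · have hΔge : m ≤ (deltaP κ p).rootMultiplicity a := by
        rw [le_rootMultiplicity_iff hΔ]
        refine dvd_sub ?_ (pow_rootMultiplicity_dvd p a)
        calc (X - C a) ^ m ∣ (X - C a) ^ m' := pow_dvd_pow _ hle
          _ ∣ p.comp (X + C κ) := by rw [← hcomp]; exact pow_rootMultiplicity_dvd _ a
      omega
    · have hΔge : m' ≤ (deltaP κ p).rootMultiplicity a := by
        rw [le_rootMultiplicity_iff hΔ]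
        refine dvd_sub ?_ ?_
        · rw [← hcomp]; exact pow_rootMultiplicity_dvd _ a
        · exact dvd_trans (pow_dvd_pow _ hlt.le) (pow_rootMultiplicity_dvd p a)
      have hΔle : (deltaP κ p).rootMultiplicity a ≤ m' := by
        rw [rootMultiplicity_le_iff hΔ]
        intro hdvd
        have hsum : p.comp (X + C κ) = deltaP κ p + p := by simp [deltaP]
        have hdvd2 : (X - C a) ^ (m' + 1) ∣ p.comp (X + C κ) := by
          rw [hsum]
          exact dvd_add hdvd (dvd_trans (pow_dvd_pow _ (by omega)) (pow_rootMultiplicity_dvd p a))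
        have hnd := pow_rootMultiplicity_not_dvd hpc a
        rw [hcomp] at hnd
        exact hnd hdvd2
      omega

lemma assoc_prod {p : ℂ[X]} (hp : p ≠ 0) {S : Finset ℂ} (hS : p.roots.toFinset ⊆ S) :
    Associated p (∏ w ∈ S, (X - C w) ^ (p.rootMultiplicity w)) := by
  have hsplit : Multiset.card p.roots = p.natDegree :=
    splits_iff_card_roots.mp (IsAlgClosed.splits p)
  have heq := C_leadingCoeff_mul_prod_multiset_X_sub_C (p := p) hsplit
  have hu : IsUnit (C p.leadingCoeff) :=
    isUnit_C.mpr (IsUnit.mk0 _ (leadingCoeff_ne_zero.mpr hp))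
  have h1 : Associated p ((p.roots.map fun a => X - C a).prod) := by
    conv_lhs => rw [← heq]
    exact associated_unit_mul_left _ _ hu
  have h3 : (p.roots.map fun a => X - C a).prod
      = ∏ w ∈ S, (X - C w) ^ (p.rootMultiplicity w) := by
    rw [Finset.prod_multiset_map_count]
    have h2 : ∀ x ∈ p.roots.toFinset,
        (X - C x) ^ (Multiset.count x p.roots) = (X - C x) ^ (p.rootMultiplicity x) :=
      fun x _ => by rw [count_roots]
    rw [Finset.prod_congr rfl h2]
    refine Finset.prod_subset hS (fun x _ hx => ?_)
    have h4 : p.rootMultiplicity x = 0 := by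
      by_contra h
      exact hx (Multiset.mem_toFinset.mpr ((mem_roots hp).mpr
        ((rootMultiplicity_pos hp).mp (Nat.pos_of_ne_zero h))))
    rw [h4, pow_zero]
  rwa [h3] at h1

theorem stmt_0 (p : ℂ[X]) (hp : p ≠ 0) (κ : ℂ) (hκ : κ ≠ 0) :
    Associated p (gcd p (deltaP κ p) * radTilde κ p) := by
  set g := gcd p (deltaP κ p) with hg
  have hgne : g ≠ 0 := fun h => hp ((gcd_eq_zero_iff _ _).mp h).1
  set S := p.roots.toFinset with hSdef
  have hgS : g.roots.toFinset ⊆ S := by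
    intro w hw
    rw [Multiset.mem_toFinset, mem_roots hgne] at hw
    rw [hSdef, Multiset.mem_toFinset, mem_roots hp]
    have h1 : 0 < g.rootMultiplicity w := (rootMultiplicity_pos hgne).mpr hw
    have h2 := rootMult_le_of_dvd hp (gcd_dvd_left p (deltaP κ p)) w
    exact (rootMultiplicity_pos hp).mp (lt_of_lt_of_le h1 h2)
  have hrad : radTilde κ p = ∏ w ∈ S, (X - C w) ^
      (p.rootMultiplicity w - min (p.rootMultiplicity w) (p.rootMultiplicity (w + κ))) := by
    apply finprod_eq_finset_prod_of_mulSupport_subset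
    intro w hw
    simp only [Function.mem_mulSupport] at hw
    have hne : p.rootMultiplicity w ≠ 0 := by
      intro h0; apply hw; rw [h0]; simp
    exact Multiset.mem_toFinset.mpr ((mem_roots hp).mpr
      ((rootMultiplicity_pos hp).mp (Nat.pos_of_ne_zero hne)))
  have hgassoc : Associated g (∏ w ∈ S, (X - C w) ^
      (min (p.rootMultiplicity w) (p.rootMultiplicity (w + κ)))) := by
    have h1 := assoc_prod hgne hgS
    have h2 : (∏ w ∈ S, (X - C w) ^ (g.rootMultiplicity w))
        = ∏ w ∈ S, (X - C w) ^ (min (p.rootMultiplicity w) (p.rootMultiplicity (w + κ))) :=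
      Finset.prod_congr rfl fun w _ => by rw [hg, rootMult_gcd_delta hp hκ w]
    rwa [h2] at h1
  have hprod : (∏ w ∈ S, (X - C w) ^
        (min (p.rootMultiplicity w) (p.rootMultiplicity (w + κ)))) * radTilde κ p
      = ∏ w ∈ S, (X - C w) ^ (p.rootMultiplicity w) := by
    rw [hrad, ← Finset.prod_mul_distrib]
    refine Finset.prod_congr rfl fun w _ => ?_
    rw [← pow_add]
    congr 1
    omega
  have h5 := hgassoc.mul_right (radTilde κ p)
  rw [hprod] at h5
  exact (assoc_prod hp (le_refl S)).trans h5.symm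
end

section
/- For any nonzero polynomial p ∈ ℂ[z] and any nonzero κ ∈ ℂ, deg p = deg gcd(p, Δ_κ p) + ñ_κ(p), where ñ_κ(p) = ∑_{w∈ℂ} (ord_w(p) − min(ord_w(p), ord_{w+κ}(p))). -/
open Polynomial

lemma rm_comp (p : ℂ[X]) (w κ : ℂ) :
    (p.comp (X + C κ)).rootMultiplicity w = p.rootMultiplicity (w + κ) := by
  rw [rootMultiplicity_eq_rootMultiplicity (t := w), comp_assoc,
    rootMultiplicity_eq_rootMultiplicity (t := w + κ)]
  congr 2
  simp [add_comp, add_assoc]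

lemma natDegree_eq_finsum {q : ℂ[X]} (hq : q ≠ 0) :
    q.natDegree = ∑ᶠ w, q.rootMultiplicity w := by
  classical
  have hs : Splits q := IsAlgClosed.splits q
  rw [hs.natDegree_eq_card_roots,
    ← Multiset.toFinset_sum_count_eq,
    finsum_eq_sum_of_support_subset (s := q.roots.toFinset)]
  · exact Finset.sum_congr rfl fun w _ => count_roots q
  · intro w hw
    simp only [Function.mem_support, ne_eq] at hw
    simp only [Finset.coe_sort_coe, Multiset.mem_toFinset, Finset.mem_coe]
    rw [mem_roots hq]
    exact rootMultiplicity_pos hq |>.mp (Nat.pos_of_ne_zero hw)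

lemma support_rm_finite {p : ℂ[X]} (hp : p ≠ 0) :
    (Function.support fun w => p.rootMultiplicity w).Finite := by
  apply Set.Finite.subset p.roots.toFinset.finite_toSet
  intro w hw
  simp only [Function.mem_support] at hw
  simp only [Finset.coe_sort_coe, Multiset.mem_toFinset, Finset.mem_coe]
  rw [mem_roots hp]
  exact (rootMultiplicity_pos hp).mp (Nat.pos_of_ne_zero hw)


lemma deltaP_ne_zero {p : ℂ[X]} {κ : ℂ} (hκ : κ ≠ 0) (hd : 0 < p.natDegree) :
    deltaP κ p ≠ 0 := by
  intro h
  have hcomp : p.comp (X + C κ) = p := by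
    have h' := h
    rw [deltaP, sub_eq_zero] at h'
    exact h'
  have heval : ∀ k : ℕ, p.eval ((k : ℂ) * κ) = p.eval 0 := by
    intro k
    induction k with
    | zero => simp
    | succ k ih =>
      have h2 := congrArg (eval ((k : ℂ) * κ)) hcomp
      rw [eval_comp, eval_add, eval_X, eval_C] at h2
      push_cast
      rw [add_mul, one_mul, h2, ih]
  set q : ℂ[X] := p - C (p.eval 0) with hqdef
  have hq0 : q ≠ 0 := by
    intro h0
    have : q.natDegree = p.natDegree := natDegree_sub_C
    rw [h0, natDegree_zero] at this
    omega
  set n := p.natDegree with hn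
  have hroots : ∀ k ∈ Finset.range (n + 1), ((k : ℂ) * κ) ∈ q.roots := by
    intro k _
    rw [mem_roots hq0]
    simp [hqdef, IsRoot, heval k]
  have hinj : Set.InjOn (fun k : ℕ => (k : ℂ) * κ) (Finset.range (n + 1)) := by
    intro a _ b _ hab
    exact Nat.cast_injective (mul_right_cancel₀ hκ hab)
  have hcard : n + 1 ≤ n := by
    calc n + 1 = ((Finset.range (n + 1)).image fun k : ℕ => (k : ℂ) * κ).card := by
          rw [Finset.card_image_of_injOn hinj, Finset.card_range]
      _ ≤ q.roots.toFinset.card := by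
          apply Finset.card_le_card
          intro x hx
          simp only [Finset.mem_image] at hx
          obtain ⟨k, hk, rfl⟩ := hx
          exact Multiset.mem_toFinset.mpr (hroots k hk)
      _ ≤ Multiset.card q.roots := q.roots.toFinset_card_le
      _ ≤ q.natDegree := q.card_roots'
      _ = n := natDegree_sub_C
  omega

lemma rm_gcd {p : ℂ[X]} (hp : p ≠ 0) {κ : ℂ} (_hΔ : deltaP κ p ≠ 0) (w : ℂ) :
    (gcd p (deltaP κ p)).rootMultiplicity w
      = min (p.rootMultiplicity w) (p.rootMultiplicity (w + κ)) := by
  have hg : gcd p (deltaP κ p) ≠ 0 := fun h => hp ((gcd_eq_zero_iff _ _).mp h).1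
  have hc : p.comp (X + C κ) ≠ 0 := by
    rw [Ne, comp_X_add_C_eq_zero_iff]
    exact hp
  have hsum : p.comp (X + C κ) = deltaP κ p + p := by rw [deltaP]; ring
  refine le_antisymm ?_ ?_
  · have hdvd : (X - C w) ^ ((gcd p (deltaP κ p)).rootMultiplicity w) ∣ gcd p (deltaP κ p) :=
      pow_rootMultiplicity_dvd _ w
    have h1 := hdvd.trans (gcd_dvd_left p (deltaP κ p))
    have h2 : (X - C w) ^ ((gcd p (deltaP κ p)).rootMultiplicity w) ∣ p.comp (X + C κ) := by
      rw [hsum]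
      exact dvd_add (hdvd.trans (gcd_dvd_right p (deltaP κ p))) h1
    refine le_min ((le_rootMultiplicity_iff hp).mpr h1) ?_
    rw [← rm_comp p w κ]
    exact (le_rootMultiplicity_iff hc).mpr h2
  · rw [le_rootMultiplicity_iff hg]
    have h1 : (X - C w) ^ min (p.rootMultiplicity w) (p.rootMultiplicity (w + κ)) ∣ p :=
      (pow_dvd_pow _ (min_le_left _ _)).trans (pow_rootMultiplicity_dvd p w)
    have h2 : (X - C w) ^ min (p.rootMultiplicity w) (p.rootMultiplicity (w + κ))
        ∣ p.comp (X + C κ) := by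
      refine (pow_dvd_pow _ ?_).trans (pow_rootMultiplicity_dvd (p.comp (X + C κ)) w)
      rw [rm_comp]
      exact min_le_right _ _
    exact dvd_gcd h1 (by rw [deltaP]; exact dvd_sub h2 h1)

theorem stmt_1 (p : ℂ[X]) (hp : p ≠ 0) (κ : ℂ) (hκ : κ ≠ 0) :
    p.natDegree = (gcd p (deltaP κ p)).natDegree + nTilde κ p := by
  by_cases h0 : p.natDegree = 0
  · obtain ⟨c, rfl⟩ := natDegree_eq_zero.mp h0
    have hΔ : deltaP κ (C c) = 0 := by simp [deltaP]
    rw [hΔ, gcd_zero_right, nTilde]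
    have h1 : (normalize (C c)).natDegree = (C c).natDegree :=
      natDegree_eq_of_degree_eq degree_normalize
    simp [h1, rootMultiplicity_C]
  · have hn : 0 < p.natDegree := Nat.pos_of_ne_zero h0
    have hΔ := deltaP_ne_zero hκ hn
    have hg : gcd p (deltaP κ p) ≠ 0 := fun h => hp ((gcd_eq_zero_iff _ _).mp h).1
    have hms : (Function.support fun w => p.rootMultiplicity w).Finite := support_rm_finite hp
    have hfs : (Function.support fun w : ℂ =>
        min (p.rootMultiplicity w) (p.rootMultiplicity (w + κ))).Finite :=
      hms.subset (fun w hw => by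
        simp only [Function.mem_support] at hw ⊢; omega)
    have hgs : (Function.support fun w : ℂ => p.rootMultiplicity w -
        min (p.rootMultiplicity w) (p.rootMultiplicity (w + κ))).Finite :=
      hms.subset (fun w hw => by
        simp only [Function.mem_support] at hw ⊢; omega)
    rw [natDegree_eq_finsum hp, natDegree_eq_finsum hg, nTilde]
    simp_rw [rm_gcd hp hΔ]
    rw [← finsum_add_distrib hfs hgs]
    exact finsum_congr fun w => by omega
end

section
/- For any nonzero polynomials p, q ∈ ℂ[z] and nonzero κ ∈ ℂ, ñ_κ(pq) ≤ ñ_κ(p) + ñ_κ(q). -/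
open Polynomial

lemma support_sub (r : ℂ[X]) (hr : r ≠ 0) (g : ℂ → ℕ) :
    (Function.support fun w => r.rootMultiplicity w - min (r.rootMultiplicity w) (g w)) ⊆
      ↑r.roots.toFinset := by
  intro w hw
  simp only [Function.mem_support] at hw
  have hpos : 0 < r.rootMultiplicity w := by omega
  simpa [Multiset.mem_toFinset, mem_roots, hr] using (rootMultiplicity_pos hr).mp hpos

theorem stmt_4 (p q : ℂ[X]) (hp : p ≠ 0) (hq : q ≠ 0) (κ : ℂ) (hκ : κ ≠ 0) :
    nTilde κ (p * q) ≤ nTilde κ p + nTilde κ q := by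
  have hpq : p * q ≠ 0 := mul_ne_zero hp hq
  classical
  set S : Finset ℂ := p.roots.toFinset ∪ q.roots.toFinset ∪ (p*q).roots.toFinset with hS
  have h1 : nTilde κ (p*q) = ∑ w ∈ S, ((p*q).rootMultiplicity w -
      min ((p*q).rootMultiplicity w) ((p*q).rootMultiplicity (w + κ))) :=
    finsum_eq_finset_sum_of_support_subset _ (by
      refine (support_sub (p*q) hpq _).trans ?_
      intro x hx; simp only [hS, Finset.coe_union]; exact Or.inr hx)
  have h2 : nTilde κ p = ∑ w ∈ S, (p.rootMultiplicity w -
      min (p.rootMultiplicity w) (p.rootMultiplicity (w + κ))) :=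
    finsum_eq_finset_sum_of_support_subset _ (by
      refine (support_sub p hp _).trans ?_
      intro x hx; simp only [hS, Finset.coe_union]; exact Or.inl (Or.inl hx))
  have h3 : nTilde κ q = ∑ w ∈ S, (q.rootMultiplicity w -
      min (q.rootMultiplicity w) (q.rootMultiplicity (w + κ))) :=
    finsum_eq_finset_sum_of_support_subset _ (by
      refine (support_sub q hq _).trans ?_
      intro x hx; simp only [hS, Finset.coe_union]; exact Or.inl (Or.inr hx))
  rw [h1, h2, h3, ← Finset.sum_add_distrib]
  refine Finset.sum_le_sum fun w _ => ?_
  rw [rootMultiplicity_mul hpq, rootMultiplicity_mul hpq]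
  omega
end

section
/- If a, b, c ∈ ℂ[z] are relatively prime, satisfy a + b = c, and a Δ_κ b − b Δ_κ a = 0 for some nonzero κ ∈ ℂ, then Δ_κ a = Δ_κ b = Δ_κ c = 0, i.e., a, b, c are all κ-periodic (hence constant). -/
open Polynomial

lemma deltaP_degree_lt (κ : ℂ) (p : ℂ[X]) (hp : p ≠ 0) : (deltaP κ p).degree < p.degree := by
  unfold deltaP
  by_cases hd : p.natDegree = 0
  · obtain ⟨x, rfl⟩ := natDegree_eq_zero.mp hd
    simp only [C_comp, sub_self, degree_zero]
    exact Ne.bot_lt (by simpa [degree_eq_bot] using hp)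
  · have hne : p.comp (X + C κ) ≠ 0 := by
      intro h0
      have := leadingCoeff_comp (p := p) (q := X + C κ) (by simp)
      rw [h0, leadingCoeff_zero, leadingCoeff_X_add_C, one_pow, mul_one] at this
      exact hp (leadingCoeff_eq_zero.mp this.symm)
    have hdeg : (p.comp (X + C κ)).degree = p.degree := by
      rw [degree_eq_natDegree hne, degree_eq_natDegree hp, natDegree_comp,
        natDegree_X_add_C, mul_one]
    have := degree_sub_lt hdeg hne
      (by rw [leadingCoeff_comp (by simp), leadingCoeff_X_add_C, one_pow, mul_one])
    rwa [hdeg] at this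

lemma deltaP_zero_of_dvd (κ : ℂ) (p : ℂ[X]) (hdvd : p ∣ deltaP κ p) : deltaP κ p = 0 := by
  by_cases hp : p = 0
  · simp [deltaP, hp]
  · exact eq_zero_of_dvd_of_degree_lt hdvd (deltaP_degree_lt κ p hp)

theorem stmt_6 (a b c : ℂ[X]) (κ : ℂ) (hκ : κ ≠ 0)
    (hrp : ∀ d : ℂ[X], d ∣ a → d ∣ b → d ∣ c → IsUnit d)
    (hsum : a + b = c)
    (h : a * deltaP κ b - b * deltaP κ a = 0) :
    deltaP κ a = 0 ∧ deltaP κ b = 0 ∧ deltaP κ c = 0 := by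
  have hcop : IsCoprime a b := by
    rw [← EuclideanDomain.gcd_isUnit_iff]
    exact hrp _ (EuclideanDomain.gcd_dvd_left a b) (EuclideanDomain.gcd_dvd_right a b)
      (hsum ▸ dvd_add (EuclideanDomain.gcd_dvd_left a b) (EuclideanDomain.gcd_dvd_right a b))
  have heq : a * deltaP κ b = b * deltaP κ a := by linear_combination h
  have ha : deltaP κ a = 0 :=
    deltaP_zero_of_dvd κ a (hcop.dvd_of_dvd_mul_left ⟨deltaP κ b, heq.symm⟩)
  have hb : deltaP κ b = 0 :=
    deltaP_zero_of_dvd κ b (hcop.symm.dvd_of_dvd_mul_left ⟨deltaP κ a, heq⟩)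
  refine ⟨ha, hb, ?_⟩
  have : deltaP κ c = deltaP κ a + deltaP κ b := by
    simp [deltaP, ← hsum, add_comp]; ring
  rw [this, ha, hb, add_zero]
end

section
/- Let κ ∈ ℂ \ {0}, n ∈ ℕ, and let a, b, c ∈ ℂ[z], not all constant. If the polynomials [a]_κ^{n̄} = a(z)a(z+κ)⋯a(z+(n−1)κ), [b]_κ^{n̄}, [c]_κ^{n̄} are relatively prime and satisfy [a]_κ^{n̄} + [b]_κ^{n̄} = [c]_κ^{n̄}, then n ≤ 2. -/
open Polynomial

/-! ### Auxiliary lemmas -/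

lemma shift_ne_zero {p : ℂ[X]} (t : ℂ) (hp : p ≠ 0) : p.comp (X + C t) ≠ 0 := by
  intro h
  apply hp
  have := congrArg (fun q : ℂ[X] => q.comp (X - C t)) h
  simpa [comp_assoc, add_comp, sub_comp, X_comp, C_comp] using this

lemma natDegree_shift (p : ℂ[X]) (t : ℂ) : (p.comp (X + C t)).natDegree = p.natDegree := by
  rw [← taylor_apply, natDegree_taylor]

lemma leadingCoeff_shift (p : ℂ[X]) (t : ℂ) :
    (p.comp (X + C t)).leadingCoeff = p.leadingCoeff := by
  rw [leadingCoeff_comp (by simp [natDegree_X_add_C])]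
  simp [(monic_X_add_C t).leadingCoeff]

lemma cas_deg (κ : ℂ) (f g : ℂ[X])
    (hC : f * g.comp (X + C κ) - f.comp (X + C κ) * g ≠ 0) :
    (f * g.comp (X + C κ) - f.comp (X + C κ) * g).natDegree < f.natDegree + g.natDegree := by
  set W := f * g.comp (X + C κ) - f.comp (X + C κ) * g with hW
  have hle : W.natDegree ≤ f.natDegree + g.natDegree := by
    refine (natDegree_sub_le _ _).trans (max_le ?_ ?_)
    · exact natDegree_mul_le.trans (by rw [natDegree_shift])
    · exact natDegree_mul_le.trans (by rw [natDegree_shift])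
  have hcoeff : W.coeff (f.natDegree + g.natDegree) = 0 := by
    rw [hW, coeff_sub]
    have h1 : (f * g.comp (X + C κ)).coeff (f.natDegree + g.natDegree)
        = f.leadingCoeff * g.leadingCoeff := by
      conv_lhs => rw [← natDegree_shift g κ]
      rw [coeff_mul_degree_add_degree, leadingCoeff_shift]
    have h2 : (f.comp (X + C κ) * g).coeff (f.natDegree + g.natDegree)
        = f.leadingCoeff * g.leadingCoeff := by
      conv_lhs => rw [← natDegree_shift f κ]
      rw [coeff_mul_degree_add_degree, leadingCoeff_shift]
    rw [h1, h2, sub_self]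
  rcases lt_or_eq_of_le hle with h | h
  · exact h
  · exact absurd (leadingCoeff_eq_zero.mp (by rw [leadingCoeff, h, hcoeff])) hC

lemma periodic_natDegree_zero {κ : ℂ} (hκ : κ ≠ 0) {p : ℂ[X]}
    (hp : p.comp (X + C κ) = p) : p.natDegree = 0 := by
  have hper : ∀ z : ℂ, p.eval (z + κ) = p.eval z := by
    intro z
    conv_rhs => rw [← hp]
    simp [eval_comp]
  have hj : ∀ j : ℕ, p.eval ((j : ℂ) * κ) = p.eval 0 := by
    intro j
    induction j with
    | zero => simp
    | succ k ih =>
      have : ((k + 1 : ℕ) : ℂ) * κ = (k : ℂ) * κ + κ := by push_cast; ring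
      rw [this, hper, ih]
  have hzero : p - C (p.eval 0) = 0 := by
    apply eq_zero_of_infinite_isRoot
    apply Set.infinite_of_injective_forall_mem
      (f := fun j : ℕ => (j : ℂ) * κ)
    · intro j1 j2 h
      have : (j1 : ℂ) = j2 := mul_right_cancel₀ hκ h
      exact_mod_cast this
    · intro j
      simp [IsRoot, hj j]
  have : p = C (p.eval 0) := sub_eq_zero.mp hzero
  rw [this, natDegree_C]

lemma kFac_ne_zero (κ : ℂ) (n : ℕ) {p : ℂ[X]} (hp : p ≠ 0) : kFac κ n p ≠ 0 := by
  rw [kFac, Finset.prod_ne_zero_iff]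
  exact fun j _ => shift_ne_zero _ hp

lemma natDegree_kFac (κ : ℂ) (n : ℕ) {p : ℂ[X]} (hp : p ≠ 0) :
    (kFac κ n p).natDegree = n * p.natDegree := by
  rw [kFac, natDegree_prod _ _ (fun j _ => shift_ne_zero _ hp)]
  simp only [natDegree_shift]
  rw [Finset.sum_const, Finset.card_range, smul_eq_mul]

lemma kFac_shift (κ : ℂ) (n : ℕ) (p : ℂ[X]) :
    (kFac κ n p).comp (X + C κ) =
      ∏ j ∈ Finset.Ico 1 (n + 1), p.comp (X + C ((j : ℂ) * κ)) := by
  rw [kFac, prod_comp, Finset.prod_Ico_eq_prod_range]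
  simp only [Nat.add_sub_cancel]
  refine Finset.prod_congr rfl fun j _ => ?_
  rw [comp_assoc]
  congr 1
  simp only [add_comp, X_comp, C_comp]
  rw [add_assoc, ← C_add]
  congr 1
  push_cast
  ring

noncomputable def MM (κ : ℂ) (n : ℕ) (p : ℂ[X]) : ℂ[X] :=
  ∏ j ∈ Finset.Ico 1 n, p.comp (X + C ((j : ℂ) * κ))

lemma MM_ne_zero (κ : ℂ) (n : ℕ) {p : ℂ[X]} (hp : p ≠ 0) : MM κ n p ≠ 0 := by
  rw [MM, Finset.prod_ne_zero_iff]
  exact fun j _ => shift_ne_zero _ hp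

lemma natDegree_MM (κ : ℂ) (n : ℕ) {p : ℂ[X]} (hp : p ≠ 0) :
    (MM κ n p).natDegree = (n - 1) * p.natDegree := by
  rw [MM, natDegree_prod _ _ (fun j _ => shift_ne_zero _ hp)]
  simp only [natDegree_shift]
  rw [Finset.sum_const, Nat.card_Ico, smul_eq_mul]

lemma MM_dvd_kFac (κ : ℂ) (n : ℕ) (p : ℂ[X]) : MM κ n p ∣ kFac κ n p := by
  rw [MM, kFac, Finset.range_eq_Ico]
  exact Finset.prod_dvd_prod_of_subset _ _ _ (Finset.Ico_subset_Ico (by omega) le_rfl)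

lemma MM_dvd_shift (κ : ℂ) (n : ℕ) (p : ℂ[X]) :
    MM κ n p ∣ (kFac κ n p).comp (X + C κ) := by
  rw [MM, kFac_shift]
  exact Finset.prod_dvd_prod_of_subset _ _ _ (Finset.Ico_subset_Ico le_rfl (by omega))

theorem stmt_8 (κ : ℂ) (hκ : κ ≠ 0) (n : ℕ) (a b c : ℂ[X])
    (hnc : ¬ (a.natDegree = 0 ∧ b.natDegree = 0 ∧ c.natDegree = 0))
    (hrp : ∀ d : ℂ[X], d ∣ kFac κ n a → d ∣ kFac κ n b → d ∣ kFac κ n c → IsUnit d)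
    (hsum : kFac κ n a + kFac κ n b = kFac κ n c) :
    n ≤ 2 := by
  classical
  by_contra hn'
  push_neg at hn'
  have hn : 3 ≤ n := hn'
  -- if kFac of p is a unit, then p is a nonzero constant
  have hconst_of_unit : ∀ p : ℂ[X], IsUnit (kFac κ n p) → p ≠ 0 ∧ p.natDegree = 0 := by
    intro p hu
    have hpne : p ≠ 0 := by
      rintro rfl
      have h0 : kFac κ n (0 : ℂ[X]) = 0 := by
        apply Finset.prod_eq_zero (Finset.mem_range.mpr (by omega : 0 < n))
        simp
      rw [h0] at hu
      exact hu.ne_zero rfl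
    refine ⟨hpne, ?_⟩
    have h0 := natDegree_eq_zero_of_isUnit hu
    rw [natDegree_kFac κ n hpne] at h0
    rcases Nat.mul_eq_zero.mp h0 with h | h
    · omega
    · exact h
  -- a, b, c are all nonzero
  have ha0 : a ≠ 0 := by
    rintro rfl
    have hF0 : kFac κ n (0 : ℂ[X]) = 0 := by
      apply Finset.prod_eq_zero (Finset.mem_range.mpr (by omega : 0 < n))
      simp
    rw [hF0, zero_add] at hsum
    have hu : IsUnit (kFac κ n b) :=
      hrp _ (by rw [hF0]; exact dvd_zero _) dvd_rfl (dvd_of_eq hsum)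
    obtain ⟨_, hdb⟩ := hconst_of_unit b hu
    obtain ⟨_, hdc⟩ := hconst_of_unit c (hsum ▸ hu)
    exact hnc ⟨natDegree_zero, hdb, hdc⟩
  have hb0 : b ≠ 0 := by
    rintro rfl
    have hG0 : kFac κ n (0 : ℂ[X]) = 0 := by
      apply Finset.prod_eq_zero (Finset.mem_range.mpr (by omega : 0 < n))
      simp
    rw [hG0, add_zero] at hsum
    have hu : IsUnit (kFac κ n a) :=
      hrp _ dvd_rfl (by rw [hG0]; exact dvd_zero _) (dvd_of_eq hsum)
    obtain ⟨_, hda⟩ := hconst_of_unit a hu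
    obtain ⟨_, hdc⟩ := hconst_of_unit c (hsum ▸ hu)
    exact hnc ⟨hda, natDegree_zero, hdc⟩
  have hc0 : c ≠ 0 := by
    rintro rfl
    have hH0 : kFac κ n (0 : ℂ[X]) = 0 := by
      apply Finset.prod_eq_zero (Finset.mem_range.mpr (by omega : 0 < n))
      simp
    rw [hH0] at hsum
    have hba : kFac κ n b = -kFac κ n a := by linear_combination hsum
    have hu : IsUnit (kFac κ n a) :=
      hrp _ dvd_rfl (hba ▸ (dvd_neg.mpr dvd_rfl)) (by rw [hH0]; exact dvd_zero _)
    obtain ⟨_, hda⟩ := hconst_of_unit a hu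
    obtain ⟨_, hdb⟩ := hconst_of_unit b (by rw [hba]; exact hu.neg)
    exact hnc ⟨hda, hdb, natDegree_zero⟩
  set F := kFac κ n a with hF
  set G := kFac κ n b with hG
  set H := kFac κ n c with hH
  have hFne : F ≠ 0 := kFac_ne_zero κ n ha0
  have hGne : G ≠ 0 := kFac_ne_zero κ n hb0
  have hHne : H ≠ 0 := kFac_ne_zero κ n hc0
  have hFG : IsCoprime F G := by
    rw [← EuclideanDomain.gcd_isUnit_iff]
    exact hrp _ (EuclideanDomain.gcd_dvd_left F G) (EuclideanDomain.gcd_dvd_right F G)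
      (hsum ▸ dvd_add (EuclideanDomain.gcd_dvd_left F G) (EuclideanDomain.gcd_dvd_right F G))
  set W := F * G.comp (X + C κ) - F.comp (X + C κ) * G with hWdef
  have hW2 : W = F * H.comp (X + C κ) - F.comp (X + C κ) * H := by
    rw [hWdef, ← hsum]
    simp only [add_comp]
    ring
  have hW3 : -W = G * H.comp (X + C κ) - G.comp (X + C κ) * H := by
    rw [hWdef, ← hsum]
    simp only [add_comp]
    ring
  by_cases hWz : W = 0
  · -- degenerate case: everything is constant
    have h1 : F * G.comp (X + C κ) = F.comp (X + C κ) * G := by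
      have := hWdef ▸ hWz
      linear_combination this
    have hFdvd : F ∣ F.comp (X + C κ) :=
      hFG.dvd_of_dvd_mul_right ⟨G.comp (X + C κ), h1.symm⟩
    obtain ⟨q, hq⟩ := hFdvd
    have hq0 : q ≠ 0 := by
      rintro rfl
      exact shift_ne_zero κ hFne (by rw [hq, mul_zero])
    have hdq : q.natDegree = 0 := by
      have h := natDegree_mul hFne hq0
      rw [← hq, natDegree_shift] at h
      omega
    have hq1 : q = 1 := by
      obtain ⟨u, rfl⟩ := natDegree_eq_zero.mp hdq
      have hlc : F.leadingCoeff * u = F.leadingCoeff := by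
        have := leadingCoeff_shift F κ
        rw [hq, leadingCoeff_mul, leadingCoeff_C] at this
        exact this
      have hlcF : F.leadingCoeff ≠ 0 := leadingCoeff_ne_zero.mpr hFne
      have hu1 : u = 1 := mul_left_cancel₀ hlcF (by rw [mul_one]; exact hlc)
      rw [hu1, map_one]
    have hFper : F.comp (X + C κ) = F := by rw [hq, hq1, mul_one]
    have hGper : G.comp (X + C κ) = G := by
      apply mul_left_cancel₀ hFne
      rw [h1, hFper]
    have hHper : H.comp (X + C κ) = H := by
      rw [← hsum, add_comp, hFper, hGper]
    have hda : a.natDegree = 0 := by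
      have h := periodic_natDegree_zero hκ hFper
      rw [hF, natDegree_kFac κ n ha0] at h
      rcases Nat.mul_eq_zero.mp h with h' | h'
      · omega
      · exact h'
    have hdb : b.natDegree = 0 := by
      have h := periodic_natDegree_zero hκ hGper
      rw [hG, natDegree_kFac κ n hb0] at h
      rcases Nat.mul_eq_zero.mp h with h' | h'
      · omega
      · exact h'
    have hdc : c.natDegree = 0 := by
      have h := periodic_natDegree_zero hκ hHper
      rw [hH, natDegree_kFac κ n hc0] at h
      rcases Nat.mul_eq_zero.mp h with h' | h'
      · omega
      · exact h'
    exact hnc ⟨hda, hdb, hdc⟩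
  · -- main case
    have hMaW : MM κ n a ∣ W := by
      rw [hWdef]
      exact dvd_sub (dvd_mul_of_dvd_left (MM_dvd_kFac κ n a) _)
        (dvd_mul_of_dvd_left (MM_dvd_shift κ n a) _)
    have hMbW : MM κ n b ∣ W := by
      rw [hWdef]
      exact dvd_sub (dvd_mul_of_dvd_right (MM_dvd_shift κ n b) _)
        (dvd_mul_of_dvd_right (MM_dvd_kFac κ n b) _)
    have hMcW : MM κ n c ∣ W := by
      rw [hW2]
      exact dvd_sub (dvd_mul_of_dvd_right (MM_dvd_shift κ n c) _)
        (dvd_mul_of_dvd_right (MM_dvd_kFac κ n c) _)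
    have hab : IsCoprime (MM κ n a) (MM κ n b) := by
      rw [← EuclideanDomain.gcd_isUnit_iff]
      have h1 : EuclideanDomain.gcd (MM κ n a) (MM κ n b) ∣ F :=
        (EuclideanDomain.gcd_dvd_left _ _).trans (MM_dvd_kFac κ n a)
      have h2 : EuclideanDomain.gcd (MM κ n a) (MM κ n b) ∣ G :=
        (EuclideanDomain.gcd_dvd_right _ _).trans (MM_dvd_kFac κ n b)
      exact hrp _ h1 h2 (hsum ▸ dvd_add h1 h2)
    have hac : IsCoprime (MM κ n a) (MM κ n c) := by
      rw [← EuclideanDomain.gcd_isUnit_iff]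
      have h1 : EuclideanDomain.gcd (MM κ n a) (MM κ n c) ∣ F :=
        (EuclideanDomain.gcd_dvd_left _ _).trans (MM_dvd_kFac κ n a)
      have h3 : EuclideanDomain.gcd (MM κ n a) (MM κ n c) ∣ H :=
        (EuclideanDomain.gcd_dvd_right _ _).trans (MM_dvd_kFac κ n c)
      have h2 : EuclideanDomain.gcd (MM κ n a) (MM κ n c) ∣ G := by
        have hGeq : G = H - F := by rw [← hsum]; ring
        rw [hGeq]
        exact dvd_sub h3 h1
      exact hrp _ h1 h2 h3
    have hbc : IsCoprime (MM κ n b) (MM κ n c) := by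
      rw [← EuclideanDomain.gcd_isUnit_iff]
      have h2 : EuclideanDomain.gcd (MM κ n b) (MM κ n c) ∣ G :=
        (EuclideanDomain.gcd_dvd_left _ _).trans (MM_dvd_kFac κ n b)
      have h3 : EuclideanDomain.gcd (MM κ n b) (MM κ n c) ∣ H :=
        (EuclideanDomain.gcd_dvd_right _ _).trans (MM_dvd_kFac κ n c)
      have h1 : EuclideanDomain.gcd (MM κ n b) (MM κ n c) ∣ F := by
        have hFeq : F = H - G := by rw [← hsum]; ring
        rw [hFeq]
        exact dvd_sub h3 h2
      exact hrp _ h1 h2 h3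
    have hdvd : MM κ n a * MM κ n b * MM κ n c ∣ W :=
      (IsCoprime.mul_left hac hbc).mul_dvd (hab.mul_dvd hMaW hMbW) hMcW
    have hWd : (n - 1) * a.natDegree + (n - 1) * b.natDegree + (n - 1) * c.natDegree
        ≤ W.natDegree := by
      have h := natDegree_le_of_dvd hdvd hWz
      rwa [natDegree_mul (mul_ne_zero (MM_ne_zero κ n ha0) (MM_ne_zero κ n hb0))
        (MM_ne_zero κ n hc0),
        natDegree_mul (MM_ne_zero κ n ha0) (MM_ne_zero κ n hb0),
        natDegree_MM κ n ha0, natDegree_MM κ n hb0, natDegree_MM κ n hc0] at h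
    have hlt1 : W.natDegree < n * a.natDegree + n * b.natDegree := by
      have h := cas_deg κ F G (by rw [← hWdef]; exact hWz)
      rw [← hWdef] at h
      rwa [hF, hG, natDegree_kFac κ n ha0, natDegree_kFac κ n hb0] at h
    have hlt2 : W.natDegree < n * a.natDegree + n * c.natDegree := by
      have h := cas_deg κ F H (by rw [← hW2]; exact hWz)
      rw [← hW2] at h
      rwa [hF, hH, natDegree_kFac κ n ha0, natDegree_kFac κ n hc0] at h
    have hlt3 : W.natDegree < n * b.natDegree + n * c.natDegree := by
      have h := cas_deg κ G H (by rw [← hW3]; exact neg_ne_zero.mpr hWz)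
      rw [← hW3, natDegree_neg] at h
      rwa [hG, hH, natDegree_kFac κ n hb0, natDegree_kFac κ n hc0] at h
    -- arithmetic contradiction
    obtain ⟨m, rfl⟩ : ∃ m, n = m + 3 := ⟨n - 3, by omega⟩
    have e : m + 3 - 1 = m + 2 := rfl
    rw [e] at hWd
    nlinarith [hWd, hlt1, hlt2, hlt3, Nat.zero_le (m * a.natDegree),
      Nat.zero_le (m * b.natDegree), Nat.zero_le (m * c.natDegree)]
end

section
/- Let κ ∈ ℂ \ {0}, α, β ∈ ℂ with β ≠ α and α ≠ β ± κ. Define a(z) = (z+α)(z+α+κ), b(z) = −(z+β)(z+β+κ), c(z) = 2(α−β)(z+(α+β+κ)/2). Then a + b = c, the polynomials a, b, c are relatively prime, none of Δ_κa, Δ_κb, Δ_κc is identically zero, max(deg a, deg b, deg c) = 2, and ñ_κ(a) = ñ_κ(b) = ñ_κ(c) = 1. -/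
open Polynomial

lemma rm_linear (u w : ℂ) : (X + C u).rootMultiplicity w = if w = -u then 1 else 0 := by
  rw [show (X + C u : ℂ[X]) = X - C (-u) by simp [sub_neg_eq_add]]
  exact rootMultiplicity_X_sub_C

lemma linear_ne (u : ℂ) : (X + C u : ℂ[X]) ≠ 0 := by
  rw [show (X + C u : ℂ[X]) = X - C (-u) by simp [sub_neg_eq_add]]
  exact X_sub_C_ne_zero _

lemma rm_quad (u κ w : ℂ) :
    ((X + C u) * (X + C (u + κ))).rootMultiplicity w =
      (if w = -u then 1 else 0) + (if w = -(u + κ) then 1 else 0) := by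
  rw [rootMultiplicity_mul (mul_ne_zero (linear_ne u) (linear_ne (u + κ))), rm_linear, rm_linear]

lemma rm_neg (p : ℂ[X]) (w : ℂ) (hp : p ≠ 0) :
    (-p).rootMultiplicity w = p.rootMultiplicity w := by
  rw [show -p = C (-1) * p by simp,
    rootMultiplicity_mul (by simpa using hp), rootMultiplicity_C, zero_add]

lemma cop_lin {x y : ℂ} (hxy : x ≠ y) : IsCoprime (X - C x : ℂ[X]) (X - C y) := by
  have h0 : (y - x) ≠ 0 := sub_ne_zero.mpr (Ne.symm hxy)
  refine ⟨C ((y - x)⁻¹), -C ((y - x)⁻¹), ?_⟩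
  have : C ((y - x)⁻¹) * (X - C x) + -C ((y - x)⁻¹) * (X - C y)
      = C ((y - x)⁻¹ * (y - x)) := by
    rw [C_mul, C_sub]; ring
  rw [this, inv_mul_cancel₀ h0, C_1]

lemma nTilde_quad (u κ : ℂ) (hκ : κ ≠ 0) :
    nTilde κ ((X + C u) * (X + C (u + κ))) = 1 := by
  unfold nTilde
  have hne1 : (-u : ℂ) ≠ -(u + κ) := fun h => hκ (by linear_combination h)
  have hne2 : (-u + κ : ℂ) ≠ -u := fun h => hκ (by linear_combination h)
  have hne3 : (-u + κ : ℂ) ≠ -(u + κ) := fun h => hκ (by linear_combination h / 2)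
  rw [finsum_eq_single _ (-u)]
  · rw [rm_quad, rm_quad, if_pos rfl, if_neg hne1, if_neg hne2, if_neg hne3]
    rfl
  · intro w hw
    rw [rm_quad, rm_quad]
    by_cases h : w = -(u + κ)
    · rw [if_neg hw, if_pos h, h, show -(u + κ) + κ = -u by ring, if_pos rfl, if_neg hne1]
      rfl
    · rw [if_neg hw, if_neg h]
      simp

theorem stmt_12 (κ α β : ℂ) (hκ : κ ≠ 0) (hab : β ≠ α)
    (h1 : α ≠ β + κ) (h2 : α ≠ β - κ) :
    let a : ℂ[X] := (X + C α) * (X + C (α + κ))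
    let b : ℂ[X] := -((X + C β) * (X + C (β + κ)))
    let c : ℂ[X] := C (2 * (α - β)) * (X + C ((α + β + κ) / 2))
    a + b = c ∧
    (∀ d : ℂ[X], d ∣ a → d ∣ b → d ∣ c → IsUnit d) ∧
    deltaP κ a ≠ 0 ∧ deltaP κ b ≠ 0 ∧ deltaP κ c ≠ 0 ∧
    max (max a.natDegree b.natDegree) c.natDegree = 2 ∧
    nTilde κ a = 1 ∧ nTilde κ b = 1 ∧ nTilde κ c = 1 := by
  intro a b c
  have hαβ : α - β ≠ 0 := sub_ne_zero.mpr (fun h => hab h.symm)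
  have hc2 : (2 : ℂ) * (α - β) ≠ 0 := mul_ne_zero two_ne_zero hαβ
  refine ⟨?_, ?_, ?_, ?_, ?_, ?_, ?_, ?_, ?_⟩
  · show (X + C α) * (X + C (α + κ)) + -((X + C β) * (X + C (β + κ)))
        = C (2 * (α - β)) * (X + C ((α + β + κ) / 2))
    have hhalf : C (2 * (α - β)) * C ((α + β + κ) / 2) = C ((α - β) * (α + β + κ)) := by
      rw [← C_mul]; congr 1; field_simp
    conv_rhs => rw [mul_add, hhalf]
    simp only [C_add, C_sub, C_mul, map_ofNat]
    ring
  · -- coprimality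
    intro d hda hdb _
    have e1 : (X + C α : ℂ[X]) = X - C (-α) := by simp only [map_neg]; ring
    have e2 : (X + C (α + κ) : ℂ[X]) = X - C (-(α + κ)) := by simp only [map_neg]; ring
    have e3 : (X + C β : ℂ[X]) = X - C (-β) := by simp only [map_neg]; ring
    have e4 : (X + C (β + κ) : ℂ[X]) = X - C (-(β + κ)) := by simp only [map_neg]; ring
    have cab : IsCoprime a b := by
      show IsCoprime ((X + C α) * (X + C (α + κ))) (-((X + C β) * (X + C (β + κ))))
      rw [IsCoprime.neg_right_iff, e1, e2, e3, e4]
      refine IsCoprime.mul_left ?_ ?_ <;> refine IsCoprime.mul_right ?_ ?_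
      · exact cop_lin (fun h => hab (by linear_combination h))
      · exact cop_lin (fun h => h1 (by linear_combination -h))
      · exact cop_lin (fun h => h2 (by linear_combination -h))
      · exact cop_lin (fun h => hab (by linear_combination h))
    exact cab.isUnit_of_dvd' hda hdb
  · -- deltaP a ≠ 0
    show deltaP κ ((X + C α) * (X + C (α + κ))) ≠ 0
    intro h
    have := congrArg (eval (-α)) h
    simp only [deltaP, eval_sub, eval_comp, eval_mul, eval_add, eval_X, eval_C, eval_zero] at this
    have h2κ : 2 * κ * κ = 0 := by linear_combination this
    rcases mul_eq_zero.mp h2κ with h | h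
    · rcases mul_eq_zero.mp h with h | h
      · exact two_ne_zero h
      · exact hκ h
    · exact hκ h
  · -- deltaP b ≠ 0
    show deltaP κ (-((X + C β) * (X + C (β + κ)))) ≠ 0
    intro h
    have := congrArg (eval (-β)) h
    simp only [deltaP, eval_sub, eval_comp, eval_neg, eval_mul, eval_add, eval_X, eval_C,
      eval_zero] at this
    have h2κ : 2 * κ * κ = 0 := by linear_combination -this
    rcases mul_eq_zero.mp h2κ with h | h
    · rcases mul_eq_zero.mp h with h | h
      · exact two_ne_zero h
      · exact hκ h
    · exact hκ h
  · -- deltaP c ≠ 0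
    show deltaP κ (C (2 * (α - β)) * (X + C ((α + β + κ) / 2))) ≠ 0
    intro h
    have := congrArg (eval 0) h
    simp only [deltaP, eval_sub, eval_comp, eval_mul, eval_add, eval_X, eval_C, eval_zero] at this
    have hz : 2 * (α - β) * κ = 0 := by linear_combination this
    rcases mul_eq_zero.mp hz with h | h
    · exact hc2 h
    · exact hκ h
  · -- degrees
    have da : a.natDegree = 2 := by
      show ((X + C α) * (X + C (α + κ))).natDegree = 2
      rw [natDegree_mul (linear_ne α) (linear_ne (α + κ)), natDegree_X_add_C, natDegree_X_add_C]
    have db : b.natDegree = 2 := by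
      show (-((X + C β) * (X + C (β + κ)))).natDegree = 2
      rw [natDegree_neg, natDegree_mul (linear_ne β) (linear_ne (β + κ)),
        natDegree_X_add_C, natDegree_X_add_C]
    have dc : c.natDegree = 1 := by
      show (C (2 * (α - β)) * (X + C ((α + β + κ) / 2))).natDegree = 1
      rw [natDegree_C_mul hc2, natDegree_X_add_C]
    rw [da, db, dc]
    rfl
  · exact nTilde_quad α κ hκ
  · -- nTilde b
    show nTilde κ (-((X + C β) * (X + C (β + κ)))) = 1
    have hb0 : (X + C β) * (X + C (β + κ)) ≠ 0 :=
      mul_ne_zero (linear_ne β) (linear_ne (β + κ))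
    have : nTilde κ (-((X + C β) * (X + C (β + κ))))
        = nTilde κ ((X + C β) * (X + C (β + κ))) := by
      unfold nTilde
      congr 1
      funext w
      rw [rm_neg _ _ hb0, rm_neg _ _ hb0]
    rw [this]
    exact nTilde_quad β κ hκ
  · -- nTilde c
    show nTilde κ (C (2 * (α - β)) * (X + C ((α + β + κ) / 2))) = 1
    have rmc : ∀ w : ℂ,
        (C (2 * (α - β)) * (X + C ((α + β + κ) / 2))).rootMultiplicity w
          = if w = -((α + β + κ) / 2) then 1 else 0 := by
      intro w
      rw [rootMultiplicity_mul (mul_ne_zero (C_ne_zero.mpr hc2) (linear_ne _)),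
        rootMultiplicity_C, rm_linear, zero_add]
    unfold nTilde
    rw [finsum_eq_single _ (-((α + β + κ) / 2))]
    · rw [rmc, rmc, if_pos rfl,
        if_neg (show -((α + β + κ) / 2) + κ ≠ -((α + β + κ) / 2) from
          fun h => hκ (by linear_combination h))]
      rfl
    · intro w hw
      rw [rmc, rmc, if_neg hw]
      simp
end

section
/- For any nonzero polynomial p ∈ ℂ[z], nonzero κ ∈ ℂ, and integer m ≥ 2, ñ_κ^{[m−1]}(p) ≤ ñ_κ(p) + ñ_{2κ}(p) + ⋯ + ñ_{(m−1)κ}(p). -/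
open Polynomial

theorem stmt_14 (p : ℂ[X]) (hp : p ≠ 0) (κ : ℂ) (hκ : κ ≠ 0) (m : ℕ) (hm : 2 ≤ m) :
    nTildeQ κ (m - 1) p ≤ ∑ j ∈ Finset.Icc 1 (m - 1), nTilde ((j : ℂ) * κ) p := by
  classical
  set q := m - 1 with hq
  set R : Finset ℂ := p.roots.toFinset with hR
  have hzero : ∀ w : ℂ, w ∉ R → p.rootMultiplicity w = 0 := by
    intro w hw
    refine rootMultiplicity_eq_zero fun hroot => ?_
    exact hw (by simp [hR, Multiset.mem_toFinset, mem_roots hp]; exact hroot)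
  -- rewrite nTildeQ as a finite sum over R
  have h1 : nTildeQ κ q p = ∑ w ∈ R, (p.rootMultiplicity w -
      (Finset.range (q + 1)).inf' (Finset.nonempty_range_iff.mpr (Nat.succ_ne_zero q))
        (fun j => p.rootMultiplicity (w + (j : ℂ) * κ))) := by
    apply finsum_eq_sum_of_support_subset
    intro w hw
    by_contra hwR
    apply hw
    simp only [Function.mem_support] at *
    rw [hzero w hwR]
    simp
  have h2 : ∀ c : ℂ, nTilde c p = ∑ w ∈ R,
      (p.rootMultiplicity w - min (p.rootMultiplicity w) (p.rootMultiplicity (w + c))) := by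
    intro c
    apply finsum_eq_sum_of_support_subset
    intro w hw
    by_contra hwR
    apply hw
    simp only [Function.mem_support] at *
    rw [hzero w hwR]
    simp
  rw [h1]
  calc ∑ w ∈ R, (p.rootMultiplicity w -
      (Finset.range (q + 1)).inf' (Finset.nonempty_range_iff.mpr (Nat.succ_ne_zero q))
        (fun j => p.rootMultiplicity (w + (j : ℂ) * κ)))
      ≤ ∑ w ∈ R, ∑ j ∈ Finset.Icc 1 q,
        (p.rootMultiplicity w - min (p.rootMultiplicity w) (p.rootMultiplicity (w + (j : ℂ) * κ))) := by
        apply Finset.sum_le_sum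
        intro w _
        obtain ⟨j₀, hj₀mem, hj₀⟩ := Finset.exists_mem_eq_inf'
          (Finset.nonempty_range_iff.mpr (Nat.succ_ne_zero q))
          (fun j => p.rootMultiplicity (w + (j : ℂ) * κ))
        rw [hj₀]
        rcases Nat.eq_zero_or_pos j₀ with h0 | hpos
        · subst h0
          simp
        · have hjIcc : j₀ ∈ Finset.Icc 1 q := by
            simp only [Finset.mem_range] at hj₀mem
            exact Finset.mem_Icc.mpr ⟨hpos, Nat.lt_succ_iff.mp hj₀mem⟩
          calc p.rootMultiplicity w - p.rootMultiplicity (w + (j₀ : ℂ) * κ)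
              ≤ p.rootMultiplicity w - min (p.rootMultiplicity w)
                  (p.rootMultiplicity (w + (j₀ : ℂ) * κ)) :=
                Nat.sub_le_sub_left (min_le_right _ _) _
            _ ≤ _ := Finset.single_le_sum (f := fun j : ℕ => p.rootMultiplicity w - min (p.rootMultiplicity w) (p.rootMultiplicity (w + (j : ℂ) * κ))) (fun j _ => Nat.zero_le _) hjIcc
    _ = ∑ j ∈ Finset.Icc 1 q, nTilde ((j : ℂ) * κ) p := by
        rw [Finset.sum_comm]
        exact Finset.sum_congr rfl fun j _ => (h2 ((j : ℂ) * κ)).symm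
end

section
/- If p ∈ ℂ[z] is nonzero and n > q ≥ 1 are integers, then for every w ∈ ℂ and κ ∈ ℂ \ {0}: ∑_{i=0}^{n−1} ord_{w+iκ}(p) − min_{0≤j≤q−1} ∑_{i=0}^{n−1} ord_{w+(i+j)κ}(p) ≤ ∑_{i=0}^{q−1} ord_{w+iκ}(p). (Truncation inequality for the difference radical of a κ-factorial.) -/
open Polynomial

theorem stmt_19 (p : ℂ[X]) (hp : p ≠ 0) (n q : ℕ) (hq : 1 ≤ q) (hnq : q < n)
    (w κ : ℂ) (hκ : κ ≠ 0) :
    (∑ i ∈ Finset.range n, p.rootMultiplicity (w + (i : ℂ) * κ)) -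
      (Finset.range q).inf' (Finset.nonempty_range_iff.mpr (by omega))
        (fun j => ∑ i ∈ Finset.range n, p.rootMultiplicity (w + ((i : ℂ) + (j : ℂ)) * κ)) ≤
    ∑ i ∈ Finset.range q, p.rootMultiplicity (w + (i : ℂ) * κ) := by
  set f : ℕ → ℕ := fun i => p.rootMultiplicity (w + (i : ℂ) * κ) with hf
  obtain ⟨j, hj, hjeq⟩ := Finset.exists_mem_eq_inf' (Finset.nonempty_range_iff.mpr (by omega : q ≠ 0))
    (fun j => ∑ i ∈ Finset.range n, p.rootMultiplicity (w + ((i : ℂ) + (j : ℂ)) * κ))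
  rw [hjeq, tsub_le_iff_right]
  have hjq : j < q := Finset.mem_range.mp hj
  have h1 : (∑ i ∈ Finset.range n, p.rootMultiplicity (w + ((i : ℂ) + (j : ℂ)) * κ))
      = ∑ i ∈ Finset.Ico j (n + j), f i := by
    rw [Finset.sum_Ico_eq_sum_range]
    refine Finset.sum_congr (by congr 1; omega) (fun i _ => ?_)
    simp only [hf]
    push_cast
    ring_nf
  rw [h1]
  calc ∑ i ∈ Finset.range n, f i
      = ∑ i ∈ Finset.range j, f i + ∑ i ∈ Finset.Ico j n, f i := by
        rw [Finset.range_eq_Ico, Finset.range_eq_Ico, Finset.sum_Ico_consecutive]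
        · omega
        · omega
    _ ≤ ∑ i ∈ Finset.range q, f i + ∑ i ∈ Finset.Ico j (n + j), f i := by
        exact add_le_add
          (Finset.sum_le_sum_of_subset (Finset.range_subset_range.mpr (by omega)))
          (Finset.sum_le_sum_of_subset (Finset.Ico_subset_Ico le_rfl (by omega)))
end
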